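/- arXiv:1412.7008 — 5 statements merged into one kernel-verified Lean document; each statement's English description precedes it below -/
import Mathlib

section
/- Let E : [0,∞) → ℝ be nonincreasing and nonnegative, and let r ∈ ℝ with r > -1. If ∫₀^∞ (1+t)^r · E(t) dt < ∞, then t^(1+r) · E(t) → 0 as t → ∞. -/
open MeasureTheory Filter Set

theorem stmt_0 (E : ℝ → ℝ) (r : ℝ)
    (hmono : AntitoneOn E (Ici 0))
    (hnonneg : ∀ t ≥ (0:ℝ), 0 ≤ E t)
    (hr : r > -1)
    (hint : IntegrableOn (fun t => (1 + t) ^ r * E t) (Ioi 0)) :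
    Tendsto (fun t => t ^ (1 + r) * E t) atTop (nhds 0) := by
  set f : ℝ → ℝ := fun t => (1 + t) ^ r * E t with hf
  set k : ℝ := min ((1/2:ℝ) ^ r) ((2:ℝ) ^ r) with hk
  have hkpos : 0 < k :=
    lt_min (Real.rpow_pos_of_pos (by norm_num) r) (Real.rpow_pos_of_pos (by norm_num) r)
  -- interval integrability
  have hii : ∀ b : ℝ, 0 ≤ b → IntervalIntegrable f volume 0 b := by
    intro b hb
    rw [intervalIntegrable_iff, uIoc_of_le hb]
    exact hint.mono_set Ioc_subset_Ioi_self
  -- tail integral tends to 0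
  have hG : Tendsto (fun t => ∫ s in (0:ℝ)..t, f s) atTop (nhds (∫ s in Ioi (0:ℝ), f s)) :=
    intervalIntegral_tendsto_integral_Ioi 0 hint tendsto_id
  have hG2 : Tendsto (fun t => ∫ s in (0:ℝ)..(t/2), f s) atTop
      (nhds (∫ s in Ioi (0:ℝ), f s)) :=
    intervalIntegral_tendsto_integral_Ioi 0 hint (tendsto_id.atTop_div_const two_pos)
  have hF : Tendsto (fun t => ∫ s in (t/2)..t, f s) atTop (nhds 0) := by
    have h := hG.sub hG2
    rw [sub_self] at h
    refine h.congr' ?_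
    filter_upwards [eventually_ge_atTop (0:ℝ)] with t ht
    exact intervalIntegral.integral_interval_sub_left (hii t ht) (hii (t/2) (by linarith))
  -- key lower bound on the interval integral
  have key : ∀ t : ℝ, 1 ≤ t → k / 2 * (t ^ (1 + r) * E t) ≤ ∫ s in (t/2)..t, f s := by
    intro t ht
    have ht0 : (0:ℝ) < t := by linarith
    have ht2 : (0:ℝ) < t / 2 := by linarith
    have hle : t / 2 ≤ t := by linarith
    rw [intervalIntegral.integral_of_le hle]
    have hmeas : MeasurableSet (Ioc (t/2) t) := measurableSet_Ioc
    have hfi : IntegrableOn f (Ioc (t/2) t) :=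
      hint.mono_set (fun s hs => lt_trans ht2 hs.1)
    have hbound : ∀ s ∈ Ioc (t/2) t, k * t ^ r * E t ≤ f s := by
      intro s hs
      obtain ⟨hs1, hs2⟩ := hs
      have hs0 : (0:ℝ) ≤ s := by linarith
      have hEts : E t ≤ E s := hmono hs0 (le_of_lt ht0) hs2
      have hrp : k * t ^ r ≤ (1 + s) ^ r := by
        rcases le_or_gt 0 r with hr0 | hr0
        · have h1 : (t/2 : ℝ) ^ r ≤ (1 + s) ^ r :=
            Real.rpow_le_rpow (le_of_lt ht2) (by linarith) hr0
          have h2 : (t/2 : ℝ) ^ r = (1/2:ℝ) ^ r * t ^ r := by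
            rw [← Real.mul_rpow (by norm_num) (le_of_lt ht0)]
            ring_nf
          have h3 : k * t ^ r ≤ (1/2:ℝ) ^ r * t ^ r :=
            mul_le_mul_of_nonneg_right (min_le_left _ _)
              (le_of_lt (Real.rpow_pos_of_pos ht0 r))
          linarith
        · have h1 : (2 * t : ℝ) ^ r ≤ (1 + s) ^ r :=
            Real.rpow_le_rpow_of_nonpos (by linarith) (by linarith) (le_of_lt hr0)
          have h2 : (2 * t : ℝ) ^ r = (2:ℝ) ^ r * t ^ r := by
            rw [Real.mul_rpow (by norm_num) (le_of_lt ht0)]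
          have h3 : k * t ^ r ≤ (2:ℝ) ^ r * t ^ r :=
            mul_le_mul_of_nonneg_right (min_le_right _ _)
              (le_of_lt (Real.rpow_pos_of_pos ht0 r))
          linarith
      have hEt0 : 0 ≤ E t := hnonneg t (le_of_lt ht0)
      calc k * t ^ r * E t ≤ (1 + s) ^ r * E t := mul_le_mul_of_nonneg_right hrp hEt0
        _ ≤ (1 + s) ^ r * E s := mul_le_mul_of_nonneg_left hEts
            (Real.rpow_nonneg (by linarith) r)
    have hci : IntegrableOn (fun _ : ℝ => k * t ^ r * E t) (Ioc (t/2) t) :=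
      integrableOn_const (by rw [Real.volume_Ioc]; exact ENNReal.ofReal_ne_top) enorm_ne_top 
    have hmon := setIntegral_mono_on hci hfi hmeas hbound
    have hconst : ∫ _ in Ioc (t/2) t, (k * t ^ r * E t) = (t - t/2) * (k * t ^ r * E t) := by
      rw [setIntegral_const, Measure.real, Real.volume_Ioc, ENNReal.toReal_ofReal (by linarith)]
      simp [smul_eq_mul]
    rw [hconst] at hmon
    have htr : t ^ (1 + r) = t * t ^ r := by
      rw [Real.rpow_add ht0, Real.rpow_one]
    calc k / 2 * (t ^ (1 + r) * E t) = (t - t/2) * (k * t ^ r * E t) := by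
          rw [htr]; ring
      _ ≤ ∫ s in Ioc (t/2) t, f s := hmon
  -- squeeze
  have hupper : Tendsto (fun t => (2 / k) * ∫ s in (t/2)..t, f s) atTop (nhds 0) := by
    simpa using hF.const_mul (2 / k)
  refine squeeze_zero' ?_ ?_ hupper
  · filter_upwards [eventually_ge_atTop (1:ℝ)] with t ht
    exact mul_nonneg (Real.rpow_nonneg (by linarith) _) (hnonneg t (by linarith))
  · filter_upwards [eventually_ge_atTop (1:ℝ)] with t ht
    have h := key t ht
    have h2 := mul_le_mul_of_nonneg_left h (le_of_lt (by positivity : (0:ℝ) < 2/k))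
    have hx : 2/k * (k/2 * (t ^ (1 + r) * E t)) = t ^ (1 + r) * E t := by
      field_simp
    linarith
end

section
/- Let γ : [0,∞) → [0,∞) be differentiable a.e. with γ'(t) ≤ −α γ(t)/(1+t) for a.e. t ≥ t₀, γ(t) ≥ K/(1+t)^α, K > 0, α ∈ [0,1), and let ρ < α. Then there exists τ₀ ≥ t₀ such that for a.e. t ≥ τ₀, the derivative of t ↦ (1+t)^ρ γ(t) minus the second derivative of t ↦ (1+t)^ρ is ≤ 0, i.e. (1+t)^ρ γ'(t) + ρ(1+t)^{ρ−1} γ(t) − ρ(ρ−1)(1+t)^{ρ−2} ≤ 0. -/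
open MeasureTheory Filter Set

theorem stmt_7 (γ γ' : ℝ → ℝ) (K α ρ t₀ : ℝ)
    (hγ0 : ∀ t ≥ (0:ℝ), 0 ≤ γ t)
    (hderiv : ∀ᵐ t ∂(volume : Measure ℝ), t ≥ t₀ → HasDerivAt γ (γ' t) t)
    (hγ' : ∀ᵐ t ∂(volume : Measure ℝ), t ≥ t₀ → γ' t ≤ -α * γ t / (1 + t))
    (hK : K > 0) (hα0 : 0 ≤ α) (hα1 : α < 1)
    (hγK : ∀ t ≥ (0:ℝ), γ t ≥ K * (1 + t) ^ (-α))
    (ht₀ : 0 ≤ t₀) (hρ : ρ < α) :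
    ∃ τ₀ ≥ t₀, ∀ᵐ t ∂(volume : Measure ℝ), t ≥ τ₀ →
      (1 + t) ^ ρ * γ' t + ρ * (1 + t) ^ (ρ - 1) * γ t - ρ * (ρ - 1) * (1 + t) ^ (ρ - 2) ≤ 0 := by
  have h1α : 0 < 1 - α := by linarith
  have hαρ : 0 < α - ρ := by linarith
  have hαρK : 0 < (α - ρ) * K := mul_pos hαρ hK
  set C : ℝ := max 1 (ρ * (1 - ρ) / ((α - ρ) * K)) with hC
  have hC1 : (1:ℝ) ≤ C := le_max_left _ _
  have hC0 : (0:ℝ) < C := lt_of_lt_of_le one_pos hC1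
  refine ⟨max t₀ (C ^ (1 / (1 - α))), le_max_left _ _, ?_⟩
  filter_upwards [hγ'] with t hb ht
  have ht0 : t₀ ≤ t := le_trans (le_max_left _ _) ht
  have htC : C ^ (1 / (1 - α)) ≤ t := le_trans (le_max_right _ _) ht
  have hCpow : (0:ℝ) < C ^ (1 / (1 - α)) := Real.rpow_pos_of_pos hC0 _
  have htpos : (0:ℝ) ≤ t := le_of_lt (lt_of_lt_of_le hCpow htC)
  have ht1 : (0:ℝ) < 1 + t := by linarith
  have hb := hb ht0
  have hg0 : 0 ≤ γ t := hγ0 t htpos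
  have f2 : K * (1 + t) ^ (-α) ≤ γ t := hγK t htpos
  have hpowC : C ≤ (1 + t) ^ (1 - α) := by
    have h1 : (C ^ (1 / (1 - α))) ^ (1 - α) = C := by
      rw [← Real.rpow_mul hC0.le, one_div_mul_cancel h1α.ne', Real.rpow_one]
    calc C = (C ^ (1 / (1 - α))) ^ (1 - α) := h1.symm
      _ ≤ (1 + t) ^ (1 - α) := Real.rpow_le_rpow hCpow.le (by linarith) h1α.le
  have f3 : ρ * (1 - ρ) ≤ (α - ρ) * K * (1 + t) ^ (1 - α) := by
    have h2 : ρ * (1 - ρ) / ((α - ρ) * K) ≤ C := le_max_right _ _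
    have h3 : ρ * (1 - ρ) ≤ C * ((α - ρ) * K) := (div_le_iff₀ hαρK).mp h2
    nlinarith [mul_le_mul_of_nonneg_left hpowC hαρK.le]
  have P1 : (0:ℝ) < (1 + t) ^ (ρ - 1) := Real.rpow_pos_of_pos ht1 _
  have P2 : (0:ℝ) < (1 + t) ^ (ρ - 2) := Real.rpow_pos_of_pos ht1 _
  have h01 : (1 + t) ^ ρ = (1 + t) ^ (ρ - 1) * (1 + t) := by
    rw [← Real.rpow_add_one ht1.ne' (ρ - 1)]; ring_nf
  have h3' : (1 + t) ^ (ρ - 1) * (1 + t) ^ (-α) = (1 + t) ^ (ρ - 2) * (1 + t) ^ (1 - α) := by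
    rw [← Real.rpow_add ht1, ← Real.rpow_add ht1]; ring_nf
  have f1 : (1 + t) * γ' t ≤ -α * γ t := by
    calc (1 + t) * γ' t ≤ (1 + t) * (-α * γ t / (1 + t)) :=
          mul_le_mul_of_nonneg_left hb ht1.le
      _ = -α * γ t := by field_simp
  have s1 : (1 + t) ^ ρ * γ' t ≤ (1 + t) ^ (ρ - 1) * (-α * γ t) := by
    rw [h01]
    calc (1 + t) ^ (ρ - 1) * (1 + t) * γ' t
        = (1 + t) ^ (ρ - 1) * ((1 + t) * γ' t) := by ring
      _ ≤ (1 + t) ^ (ρ - 1) * (-α * γ t) := mul_le_mul_of_nonneg_left f1 P1.le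
  have s2 : (ρ - α) * γ t * (1 + t) ^ (ρ - 1)
      ≤ (ρ - α) * K * ((1 + t) ^ (ρ - 2) * (1 + t) ^ (1 - α)) := by
    have hle : (ρ - α) * γ t ≤ (ρ - α) * (K * (1 + t) ^ (-α)) :=
      mul_le_mul_of_nonpos_left f2 (by linarith)
    calc (ρ - α) * γ t * (1 + t) ^ (ρ - 1)
        ≤ (ρ - α) * (K * (1 + t) ^ (-α)) * (1 + t) ^ (ρ - 1) :=
          mul_le_mul_of_nonneg_right hle P1.le
      _ = (ρ - α) * K * ((1 + t) ^ (ρ - 1) * (1 + t) ^ (-α)) := by ring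
      _ = (ρ - α) * K * ((1 + t) ^ (ρ - 2) * (1 + t) ^ (1 - α)) := by rw [h3']
  have s3 : (ρ - α) * K * ((1 + t) ^ (ρ - 2) * (1 + t) ^ (1 - α))
      ≤ ρ * (ρ - 1) * (1 + t) ^ (ρ - 2) := by
    have h4 : (ρ - α) * K * (1 + t) ^ (1 - α) ≤ ρ * (ρ - 1) := by nlinarith
    nlinarith [mul_le_mul_of_nonneg_right h4 P2.le]
  nlinarith [s1, s2, s3]
end

section
/- Let u be a C² solution of u'' + γ u' + ∇φ(u) = 0 on [0,∞) with γ ≥ 0 continuous, φ C¹ convex and bounded below with min φ attained. Let v be a minimizer of φ and p(t) = (1/2)‖u(t) − v‖². Then for all t ≥ 0, p''(t) + γ(t) p'(t) ≤ (3/2)‖u'(t)‖² − E(t), where E(t) = (1/2)‖u'(t)‖² + φ(u(t)) − min φ. -/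
open Set

local notation "⟪" x ", " y "⟫" => @inner ℝ _ _ x y

/-- Convex gradient inequality: ⟪∇φ(x), x - v⟫ ≥ φ x - φ v. -/
lemma grad_convex_ineq {H : Type*} [NormedAddCommGroup H] [InnerProductSpace ℝ H]
    [CompleteSpace H]
    {φ : H → ℝ} {g : H → H} (hconv : ConvexOn ℝ univ φ)
    (hgrad : ∀ x, HasGradientAt φ (g x) x) (x v : H) :
    φ x - φ v ≤ ⟪g x, x - v⟫ := by
  set L : AffineMap ℝ ℝ H := AffineMap.lineMap x v with hL
  have hcomp : ConvexOn ℝ univ (φ ∘ L) := by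
    have := hconv.comp_affineMap L
    simpa using this
  have hline : HasDerivAt (fun s : ℝ => L s) (v - x) 0 := by
    have heqf : (fun s : ℝ => L s) = fun s : ℝ => s • (v - x) + x := by
      funext s
      simp only [hL, AffineMap.lineMap_apply, smul_sub, vsub_eq_sub, vadd_eq_add]
    rw [heqf]
    simpa using (hasDerivAt_id (0:ℝ)).smul_const (v - x) |>.add_const x
  have hL0 : L 0 = x := by simp [hL]
  have hd : HasDerivAt (φ ∘ L) ⟪g x, v - x⟫ 0 := by
    have hF : HasFDerivAt φ ((InnerProductSpace.toDual ℝ H) (g x) : H →L[ℝ] ℝ) (L 0) := by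
      rw [hL0]; exact hgrad x
    have := hF.comp_hasDerivAt (0:ℝ) hline
    simpa using this
  have hslope := hcomp.le_slope_of_hasDerivAt (x := 0) (y := 1) (mem_univ _) (mem_univ _)
    one_pos hd
  have hs : slope (φ ∘ L) 0 1 = φ v - φ x := by
    simp [slope_def_field, hL, Function.comp, AffineMap.lineMap_apply]
  rw [hs] at hslope
  have : ⟪g x, v - x⟫ = -⟪g x, x - v⟫ := by
    rw [← inner_neg_right]; congr 1; abel
  linarith [hslope, this ▸ hslope]

theorem stmt_10 {H : Type*} [NormedAddCommGroup H] [InnerProductSpace ℝ H] [CompleteSpace H]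
    (γ : ℝ → ℝ) (φ : H → ℝ) (gφ : H → H) (u u' u'' : ℝ → H) (v : H)
    (p p' p'' : ℝ → ℝ)
    (hγc : Continuous γ) (hγ0 : ∀ t, 0 ≤ γ t)
    (hconv : ConvexOn ℝ univ φ)
    (hgrad : ∀ x, HasGradientAt φ (gφ x) x)
    (hmin : ∀ x, φ v ≤ φ x)
    (hu : ∀ t, HasDerivAt u (u' t) t)
    (hu' : ∀ t, HasDerivAt u' (u'' t) t)
    (heq : ∀ t, u'' t + γ t • u' t + gφ (u t) = 0)
    (hp : ∀ t, p t = (1 / 2) * ‖u t - v‖ ^ 2)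
    (hp' : ∀ t, HasDerivAt p (p' t) t)
    (hp'' : ∀ t, HasDerivAt p' (p'' t) t)
    (E : ℝ → ℝ) (hE : ∀ t, E t = (1 / 2) * ‖u' t‖ ^ 2 + φ (u t) - φ v) :
    ∀ t ≥ (0:ℝ), p'' t + γ t * p' t ≤ (3 / 2) * ‖u' t‖ ^ 2 - E t := by
  -- first derivative identity
  have hpfun : p = fun t => (1 / 2) * ‖u t - v‖ ^ 2 := funext hp
  have hder1 : ∀ t, HasDerivAt p ⟪u' t, u t - v⟫ t := by
    intro t
    have h1 : HasDerivAt (fun s => u s - v) (u' t) t := (hu t).sub_const v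
    have h2 : HasDerivAt (fun s => ⟪u s - v, u s - v⟫)
        (⟪u t - v, u' t⟫ + ⟪u' t, u t - v⟫) t := h1.inner ℝ h1
    have h3 : HasDerivAt (fun s => (1/2 : ℝ) * ⟪u s - v, u s - v⟫)
        ((1/2) * (⟪u t - v, u' t⟫ + ⟪u' t, u t - v⟫)) t := h2.const_mul _
    have : p = fun s => (1/2 : ℝ) * ⟪u s - v, u s - v⟫ := by
      funext s
      rw [hp s, real_inner_self_eq_norm_sq]
    rw [this]
    convert h3 using 1
    rw [real_inner_comm (u t - v) (u' t)]
    ring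
  have hp'eq : ∀ t, p' t = ⟪u' t, u t - v⟫ := fun t =>
    (hp' t).unique (hder1 t)
  have hp''eq : ∀ t, p'' t = ⟪u'' t, u t - v⟫ + ‖u' t‖ ^ 2 := by
    intro t
    have h1 : HasDerivAt (fun s => u s - v) (u' t) t := (hu t).sub_const v
    have h2 : HasDerivAt (fun s => ⟪u' s, u s - v⟫)
        (⟪u' t, u' t⟫ + ⟪u'' t, u t - v⟫) t := (hu' t).inner ℝ h1
    have h3 : HasDerivAt p' (⟪u' t, u' t⟫ + ⟪u'' t, u t - v⟫) t := by
      have : p' = fun s => ⟪u' s, u s - v⟫ := funext hp'eq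
      rw [this]; exact h2
    have h4 := (hp'' t).unique h3
    rw [h4, real_inner_self_eq_norm_sq]; ring
  intro t _
  have hkey : φ (u t) - φ v ≤ ⟪gφ (u t), u t - v⟫ :=
    grad_convex_ineq hconv hgrad (u t) v
  have heq' : gφ (u t) = -(u'' t + γ t • u' t) :=
    eq_neg_of_add_eq_zero_right (heq t)
  have hsum : ⟪u'' t, u t - v⟫ + γ t * ⟪u' t, u t - v⟫ = -⟪gφ (u t), u t - v⟫ := by
    rw [heq', inner_neg_left, inner_add_left, real_inner_smul_left, neg_neg]
  rw [hp''eq, hp'eq, hE]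
  nlinarith [hsum, hkey]
end

section
/- Let α ∈ [0,1) and suppose A ⊆ ℝ is a nonempty downward-closed set (an interval of the form (−∞, α₀) or (−∞, α₀]) containing −α, with the property: for all ν ∈ A with ν < 2α − 1, one has ν + 1 − α ∈ A. Then sup A ≥ α. -/
/-- `sup A ≥ α` expressed, for a downward-closed set `A`, as: every `β < α` lies in `A`. -/
theorem stmt_13 (α : ℝ) (hα0 : 0 ≤ α) (hα1 : α < 1) (A : Set ℝ)
    (hne : A.Nonempty)
    (hdc : ∀ ν ∈ A, ∀ μ : ℝ, μ ≤ ν → μ ∈ A)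
    (hmem : -α ∈ A)
    (hclos : ∀ ν ∈ A, ν < 2 * α - 1 → ν + 1 - α ∈ A) :
    ∀ β : ℝ, β < α → β ∈ A := by
  have key : ∀ n : ℕ, ∀ β : ℝ, β < α → β ≤ -α + n * (1 - α) → β ∈ A := by
    intro n
    induction n with
    | zero => intro β hβ hle; exact hdc _ hmem _ (by simpa using hle)
    | succ n ih =>
      intro β hβ hle
      by_cases h : β ≤ -α
      · exact hdc _ hmem _ h
      · have h1 : β - (1 - α) < α := by linarith
        have h2 : β - (1 - α) ≤ -α + n * (1 - α) := by
          push_cast at hle ⊢; linarith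
        have hA : β - (1 - α) ∈ A := ih _ h1 h2
        have h3 : β - (1 - α) < 2 * α - 1 := by linarith
        have := hclos _ hA h3
        have heq : β - (1 - α) + 1 - α = β := by ring
        rwa [heq] at this
  intro β hβ
  obtain ⟨n, hn⟩ := exists_nat_ge ((β + α) / (1 - α))
  have h1α : (0:ℝ) < 1 - α := by linarith
  refine key n β hβ ?_
  have := (div_le_iff₀ h1α).mp hn
  linarith
end

section
/- Let α ∈ [0, 1/2], K > 0, and let E : [0,∞) → [0,∞) be nonincreasing with ∫₀^∞ (1+t)^{−α} E(t) dt < ∞ and E(t) = ∫_t^∞ γ(s) g(s) ds where γ(s) ≥ K(1+s)^{−α} and g ≥ 0 measurable with ∫₀^∞ γ g < ∞. Then ∫₀^∞ (1+t)^{1−2α} g(t) dt < ∞ and E(t) = o(t^{α−1}) as t → ∞. -/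
open MeasureTheory Filter Set

private lemma part2_aux (α : ℝ) (E : ℝ → ℝ) (hα0 : 0 ≤ α) (hα1 : α < 1)
    (hE0 : ∀ t ≥ (0:ℝ), 0 ≤ E t) (hmono : AntitoneOn E (Ici 0))
    (hEint : IntegrableOn (fun t => (1 + t) ^ (-α) * E t) (Ioi 0)) :
    Tendsto (fun t => t ^ (1 - α) * E t) atTop (nhds 0) := by
  set h : ℝ → ℝ := fun t => (1 + t) ^ (-α) * E t with hh
  have hnn : ∀ t, 0 ≤ t → 0 ≤ h t := fun t ht =>
    mul_nonneg (Real.rpow_nonneg (by linarith) _) (hE0 t ht)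
  -- the tail integral tends to 0
  have hT : Tendsto (fun a => ∫ s in Ioi a, h s) atTop (nhds 0) := by
    have h0 := intervalIntegral_tendsto_integral_Ioi 0 hEint tendsto_id
    have heq : ∀ᶠ a in atTop, (∫ s in Ioi 0, h s) - (∫ s in (0:ℝ)..(id a), h s)
        = ∫ s in Ioi a, h s := by
      filter_upwards [eventually_ge_atTop (0:ℝ)] with a ha
      rw [id, intervalIntegral.integral_of_le ha, eq_comm, eq_sub_iff_add_eq, add_comm,
        ← setIntegral_union (Ioc_disjoint_Ioi le_rfl) measurableSet_Ioi
          (hEint.mono_set Ioc_subset_Ioi_self) (hEint.mono_set (Ioi_subset_Ioi ha)),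
        Ioc_union_Ioi_eq_Ioi ha]
    have := (tendsto_const_nhds.sub h0).congr' heq
    simpa using this
  have hTlim : Tendsto (fun t : ℝ => 4 * ∫ s in Ioi (t/2), h s) atTop (nhds 0) := by
    have hdiv : Tendsto (fun t : ℝ => t / 2) atTop atTop :=
      tendsto_id.atTop_div_const (by norm_num)
    simpa using (hT.comp hdiv).const_mul 4
  apply squeeze_zero' (g := fun t : ℝ => 4 * ∫ s in Ioi (t/2), h s) ?_ ?_ hTlim
  · filter_upwards [eventually_ge_atTop (0:ℝ)] with t ht
    exact mul_nonneg (Real.rpow_nonneg ht _) (hE0 t ht)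
  · filter_upwards [eventually_ge_atTop (1:ℝ)] with t ht
    have ht0 : (0:ℝ) < t := lt_of_lt_of_le one_pos ht
    have h1t : (0:ℝ) < 1 + t := by linarith
    set c : ℝ := (1 + t) ^ (-α) * E t with hc
    have hc0 : 0 ≤ c := hnn t ht0.le
    set J : ℝ := ∫ s in Ioc (t/2) t, h s with hJdef
    have hJ : c * (t / 2) ≤ J := by
      have hsub : Ioc (t/2) t ⊆ Ioi (0:ℝ) := fun s hs => lt_trans (by linarith) hs.1
      have hineq : ∀ s ∈ Ioc (t/2) t, c ≤ h s := by
        intro s hs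
        have hs0 : (0:ℝ) < s := lt_trans (by linarith) hs.1
        have h1 : (1 + t) ^ (-α) ≤ (1 + s) ^ (-α) :=
          Real.rpow_le_rpow_of_nonpos (by linarith) (by linarith [hs.2]) (by linarith)
        have h2 : E t ≤ E s := hmono hs0.le ht0.le hs.2
        exact mul_le_mul h1 h2 (hE0 t ht0.le) (Real.rpow_nonneg (by linarith) _)
      have := setIntegral_ge_of_const_le_real measurableSet_Ioc
        (by simp : volume (Ioc (t/2) t) ≠ ⊤) hineq (hEint.mono_set hsub)
      rwa [Real.volume_real_Ioc_of_le (by linarith),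
        (by ring : t - t/2 = t/2)] at this
    have key1 : t ^ (-α) * (1 + t) ^ α ≤ 2 := by
      have h1 : (1 + t) ^ α ≤ (2 * t) ^ α := Real.rpow_le_rpow (by linarith) (by linarith) hα0
      have h2 : ((2:ℝ) * t) ^ α = 2 ^ α * t ^ α := Real.mul_rpow (by norm_num) ht0.le
      have h3 : (2:ℝ) ^ α ≤ 2 := by
        calc (2:ℝ) ^ α ≤ 2 ^ (1:ℝ) :=
              Real.rpow_le_rpow_of_exponent_le (by norm_num) (by linarith)
          _ = 2 := Real.rpow_one 2
      have h4 : t ^ (-α) * t ^ α = 1 := by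
        rw [← Real.rpow_add ht0]; simp
      calc t ^ (-α) * (1 + t) ^ α ≤ t ^ (-α) * (2 ^ α * t ^ α) := by
            refine mul_le_mul_of_nonneg_left ?_ (Real.rpow_nonneg ht0.le _)
            rw [← h2]; exact h1
        _ = 2 ^ α * (t ^ (-α) * t ^ α) := by ring
        _ = 2 ^ α := by rw [h4, mul_one]
        _ ≤ 2 := h3
    have hEt : E t = (1 + t) ^ α * c := by
      rw [hc, ← mul_assoc, ← Real.rpow_add h1t]
      simp
    have ht1a : t ^ (1 - α) = t * t ^ (-α) := by
      rw [(by ring : (1:ℝ) - α = 1 + -α), Real.rpow_add ht0, Real.rpow_one]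
    have hmain : t ^ (1 - α) * E t ≤ 4 * J := by
      have hct : c * t ≤ 2 * J := by linarith
      have hJ0 : 0 ≤ 2 * J := le_trans (by positivity) hct
      calc t ^ (1 - α) * E t = (c * t) * (t ^ (-α) * (1 + t) ^ α) := by
            rw [hEt, ht1a]; ring
        _ ≤ (2 * J) * 2 :=
            mul_le_mul hct key1 (by positivity) hJ0
        _ = 4 * J := by ring
    have hJle : J ≤ ∫ s in Ioi (t/2), h s := by
      refine setIntegral_mono_set (hEint.mono_set (Ioi_subset_Ioi (by linarith))) ?_ ?_
      · exact ae_restrict_of_forall_mem measurableSet_Ioi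
          (fun s hs => hnn s (le_of_lt (lt_trans (by linarith) hs)))
      · exact HasSubset.Subset.eventuallyLE Ioc_subset_Ioi_self
    linarith

theorem stmt_14 (α K : ℝ) (E γ g : ℝ → ℝ)
    (hα0 : 0 ≤ α) (hα : α ≤ 1 / 2) (hK : K > 0)
    (hγm : Measurable γ) (hgm : Measurable g)
    (hγ0 : ∀ s ≥ (0:ℝ), 0 ≤ γ s) (hg0 : ∀ s ≥ (0:ℝ), 0 ≤ g s)
    (hE0 : ∀ t ≥ (0:ℝ), 0 ≤ E t)
    (hmono : AntitoneOn E (Ici 0))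
    (hγK : ∀ s ≥ (0:ℝ), γ s ≥ K * (1 + s) ^ (-α))
    (hint : IntegrableOn (fun s => γ s * g s) (Ioi 0))
    (hE : ∀ t, E t = ∫ s in Ioi t, γ s * g s)
    (hEint : IntegrableOn (fun t => (1 + t) ^ (-α) * E t) (Ioi 0)) :
    IntegrableOn (fun t => (1 + t) ^ (1 - 2 * α) * g t) (Ioi 0) ∧
      Tendsto (fun t => t ^ (1 - α) * E t) atTop (nhds 0) := by
  have hα1 : α < 1 := lt_of_le_of_lt hα (by norm_num)
  constructor
  · -- Part 1
    set F : ℝ → ℝ := fun s => γ s * g s with hFdef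
    have hFm : Measurable F := hγm.mul hgm
    have hFnn : ∀ s, 0 < s → 0 ≤ F s := fun s hs =>
      mul_nonneg (hγ0 s hs.le) (hg0 s hs.le)
    have hpm : Measurable (fun t : ℝ => (1 + t) ^ (-α)) :=
      (measurable_const.add measurable_id).pow_const _
    -- lintegral form of E
    have hEl : ∀ t : ℝ, 0 < t →
        (∫⁻ s in Ioi t, ENNReal.ofReal (F s)) = ENNReal.ofReal (E t) := by
      intro t ht
      rw [hE t]
      exact (ofReal_integral_eq_lintegral_ofReal (hint.mono_set (Ioi_subset_Ioi ht.le))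
        (ae_restrict_of_forall_mem measurableSet_Ioi
          (fun s hs => hFnn s (lt_trans ht hs)))).symm
    -- Fubini
    set G : ℝ × ℝ → ENNReal := fun p =>
      {q : ℝ × ℝ | q.1 < q.2}.indicator
        (fun q => ENNReal.ofReal ((1 + q.1) ^ (-α)) * ENNReal.ofReal (F q.2)) p with hGdef
    have hGm : Measurable G := by
      apply Measurable.indicator
      · exact ((hpm.comp measurable_fst).ennreal_ofReal.mul
          ((hFm.comp measurable_snd).ennreal_ofReal))
      · exact measurableSet_lt measurable_fst measurable_snd
    have hswap :
        (∫⁻ t in Ioi (0:ℝ), ∫⁻ s in Ioi (0:ℝ), G (t, s)) =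
          ∫⁻ s in Ioi (0:ℝ), ∫⁻ t in Ioi (0:ℝ), G (t, s) := by
      exact lintegral_lintegral_swap (hGm.aemeasurable)
    have hleft : (∫⁻ t in Ioi (0:ℝ), ∫⁻ s in Ioi (0:ℝ), G (t, s)) =
        ∫⁻ t in Ioi (0:ℝ), ENNReal.ofReal ((1 + t) ^ (-α)) * ENNReal.ofReal (E t) := by
      refine setLIntegral_congr_fun measurableSet_Ioi (fun t ht => ?_)
      have h1 : (fun s => G (t, s)) = (Ioi t).indicator
          (fun s => ENNReal.ofReal ((1 + t) ^ (-α)) * ENNReal.ofReal (F s)) := by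
        funext s
        by_cases hts : t < s
        · simp [hGdef, indicator_of_mem, hts, Set.mem_Ioi, Set.mem_setOf_eq]
        · simp [hGdef, indicator_of_notMem, hts, Set.mem_Ioi, Set.mem_setOf_eq]
      rw [h1, lintegral_indicator measurableSet_Ioi,
        Measure.restrict_restrict measurableSet_Ioi,
        (inter_eq_left.mpr (Ioi_subset_Ioi (le_of_lt ht))),
        lintegral_const_mul _ hFm.ennreal_ofReal, hEl t ht]
    have hright : (∫⁻ s in Ioi (0:ℝ), ∫⁻ t in Ioi (0:ℝ), G (t, s)) =
        ∫⁻ s in Ioi (0:ℝ), ENNReal.ofReal (F s) *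
          ENNReal.ofReal (((1 + s) ^ (1 - α) - 1) / (1 - α)) := by
      refine setLIntegral_congr_fun measurableSet_Ioi (fun s hs => ?_)
      have h1 : (fun t => G (t, s)) = (Iio s).indicator
          (fun t => ENNReal.ofReal ((1 + t) ^ (-α)) * ENNReal.ofReal (F s)) := by
        funext t
        by_cases hts : t < s
        · simp [hGdef, indicator_of_mem, hts, Set.mem_Iio, Set.mem_setOf_eq]
        · simp [hGdef, indicator_of_notMem, hts, Set.mem_Iio, Set.mem_setOf_eq]
      have hioo : Iio s ∩ Ioi (0:ℝ) = Ioo 0 s := by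
        ext x; simp [Set.mem_Ioo, and_comm]
      rw [h1, lintegral_indicator measurableSet_Iio,
        Measure.restrict_restrict measurableSet_Iio, hioo,
        lintegral_mul_const _ hpm.ennreal_ofReal, mul_comm]
      congr 1
      -- compute ∫⁻ t in Ioo 0 s, (1+t)^(-α)
      have hcont : IntegrableOn (fun t : ℝ => (1 + t) ^ (-α)) (Ioo 0 s) := by
        have hc : ContinuousOn (fun t : ℝ => (1 + t) ^ (-α)) (Icc 0 s) := by
          apply ContinuousOn.rpow_const
          · exact (continuous_const.add continuous_id).continuousOn
          · intro x hx; left; have : (0:ℝ) ≤ x := hx.1; positivity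
        exact (hc.integrableOn_compact isCompact_Icc).mono_set Ioo_subset_Icc_self
      rw [← ofReal_integral_eq_lintegral_ofReal hcont
        (ae_restrict_of_forall_mem measurableSet_Ioo
          (fun x hx => Real.rpow_nonneg (by linarith [hx.1]) _))]
      congr 1
      have hioc : (∫ t in Ioo (0:ℝ) s, (1 + t) ^ (-α)) = ∫ t in (0:ℝ)..s, (1 + t) ^ (-α) := by
        rw [intervalIntegral.integral_of_le (le_of_lt hs), ← integral_Ioc_eq_integral_Ioo]
      have h10 : (1:ℝ) + 0 = 1 := by norm_num
      rw [hioc, intervalIntegral.integral_comp_add_left (fun u : ℝ => u ^ (-α)) 1, h10,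
        integral_rpow (Or.inl (by linarith : (-1:ℝ) < -α)), Real.one_rpow,
        (by ring : -α + 1 = 1 - α)]
    -- finiteness
    have hfin : (∫⁻ s in Ioi (0:ℝ), ENNReal.ofReal
        (F s * (((1 + s) ^ (1 - α) - 1) / (1 - α)))) < ⊤ := by
      have heq : (∫⁻ s in Ioi (0:ℝ), ENNReal.ofReal
          (F s * (((1 + s) ^ (1 - α) - 1) / (1 - α)))) =
          ∫⁻ s in Ioi (0:ℝ), ENNReal.ofReal (F s) *
            ENNReal.ofReal (((1 + s) ^ (1 - α) - 1) / (1 - α)) := by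
        refine setLIntegral_congr_fun measurableSet_Ioi (fun s hs => ?_)
        exact ENNReal.ofReal_mul (hFnn s hs)
      have heq2 : (∫⁻ t in Ioi (0:ℝ), ENNReal.ofReal ((1 + t) ^ (-α)) * ENNReal.ofReal (E t)) =
          ∫⁻ t in Ioi (0:ℝ), ENNReal.ofReal ((1 + t) ^ (-α) * E t) := by
        refine setLIntegral_congr_fun measurableSet_Ioi (fun t ht => ?_)
        exact (ENNReal.ofReal_mul (Real.rpow_nonneg (by linarith [mem_Ioi.mp ht]) _)).symm
      rw [heq, ← hright, ← hswap, hleft, heq2]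
      exact hEint.lintegral_lt_top
    have h1nn : ∀ s : ℝ, 0 < s → 0 ≤ ((1 + s) ^ (1 - α) - 1) / (1 - α) := by
      intro s hs
      apply div_nonneg _ (by linarith)
      have : (1:ℝ) = (1:ℝ) ^ (1 - α) := (Real.one_rpow _).symm
      nlinarith [Real.rpow_le_rpow (by norm_num : (0:ℝ) ≤ 1) (by linarith : (1:ℝ) ≤ 1 + s)
        (by linarith : (0:ℝ) ≤ 1 - α), Real.one_rpow (1 - α)]
    have hint1 : IntegrableOn (fun s => F s * (((1 + s) ^ (1 - α) - 1) / (1 - α))) (Ioi 0) := by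
      constructor
      · exact (hFm.mul ((((measurable_const.add measurable_id).pow_const _).sub
          measurable_const).div_const _)).aestronglyMeasurable
      · rw [hasFiniteIntegral_iff_ofReal
          (ae_restrict_of_forall_mem measurableSet_Ioi
            (fun s hs => mul_nonneg (hFnn s hs) (h1nn s hs)))]
        exact hfin
    have hint2 : IntegrableOn (fun s => F s * (1 + s) ^ (1 - α)) (Ioi 0) := by
      have h3 : IntegrableOn
          ((fun x => (1 - α) * (F x * (((1 + x) ^ (1 - α) - 1) / (1 - α)))) + F) (Ioi 0) :=
        (hint1.const_mul (1 - α)).add hint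
      refine h3.congr_fun (fun s hs => ?_) measurableSet_Ioi
      simp only [Pi.add_apply]
      have hne : (1:ℝ) - α ≠ 0 := by linarith
      field_simp
      ring
    -- comparison
    refine Integrable.mono' (hint2.const_mul (1 / K)) ?_ ?_
    · exact (((measurable_const.add measurable_id).pow_const _).mul hgm).aestronglyMeasurable
    · refine ae_restrict_of_forall_mem measurableSet_Ioi (fun t ht => ?_)
      have ht0 : (0:ℝ) < t := ht
      have h1t : (0:ℝ) < 1 + t := by linarith
      have hbase : (0:ℝ) ≤ (1 + t) ^ (1 - 2*α) * g t :=
        mul_nonneg (Real.rpow_nonneg h1t.le _) (hg0 t ht0.le)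
      rw [Real.norm_of_nonneg hbase]
      have hγg : K * ((1 + t) ^ (-α) * g t) ≤ F t := by
        have := mul_le_mul_of_nonneg_right (hγK t ht0.le) (hg0 t ht0.le)
        calc K * ((1 + t) ^ (-α) * g t) = K * (1 + t) ^ (-α) * g t := by ring
          _ ≤ γ t * g t := this
      have hsplit : (1 + t) ^ (1 - 2*α) = (1 + t) ^ (1 - α) * (1 + t) ^ (-α) := by
        rw [← Real.rpow_add h1t]; ring_nf
      calc (1 + t) ^ (1 - 2*α) * g t = (1 + t) ^ (1 - α) * ((1 + t) ^ (-α) * g t) := by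
            rw [hsplit]; ring
        _ ≤ (1 + t) ^ (1 - α) * (F t / K) := by
            refine mul_le_mul_of_nonneg_left ?_ (Real.rpow_nonneg h1t.le _)
            rw [le_div_iff₀ hK]
            calc (1 + t) ^ (-α) * g t * K = K * ((1 + t) ^ (-α) * g t) := by ring
              _ ≤ F t := hγg
        _ = 1 / K * (F t * (1 + t) ^ (1 - α)) := by ring
  · exact part2_aux α E hα0 hα1 hE0 hmono hEint
end
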